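/- arXiv:2002.04190 — 3 statements merged into one kernel-verified Lean document; each statement's English description precedes it below -/
import Mathlib

section
/- Let (a_n) be an arithmetic sequence, x ∈ 𝕋 with canonical representation x = Σ c_n/a_n, and B ⊆ ℕ with positive upper natural density such that lim_{n ∈ B} a_{n-1}x = 0 in 𝕋. If B is q-bounded and d(B \ supp(x)) = 0, then c_n = q_n - 1 for all n in B outside a set of natural density zero (i.e., B ⊆^d supp_q(x)), and there exists B' ⊆ B with d(B \ B') = 0 such that lim_{n ∈ B'} {a_{n-1}x} = 1 in ℝ. -/
open Filter Topology Set

/-- Upper natural density of a set of naturals. -/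
noncomputable def upperDensity (A : Set ℕ) : ℝ :=
  Filter.limsup (fun n => (Nat.card ↥(A ∩ Set.Iio n) : ℝ) / n) Filter.atTop

/-- `A` has natural density `δ`. -/
def HasDensity (A : Set ℕ) (δ : ℝ) : Prop :=
  Filter.Tendsto (fun n => (Nat.card ↥(A ∩ Set.Iio n) : ℝ) / n) Filter.atTop (nhds δ)

/-- Statistical convergence of a real sequence. -/
def StatTendsto (x : ℕ → ℝ) (ξ : ℝ) : Prop :=
  ∀ ε : ℝ, 0 < ε → HasDensity {n | ε ≤ |x n - ξ|} 0

/-- An arithmetic sequence: `a 0 = 1 < a 1 < a 2 < ⋯` and `a n ∣ a (n+1)`. -/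
def IsArithmeticSeq (a : ℕ → ℕ) : Prop :=
  a 0 = 1 ∧ StrictMono a ∧ ∀ n, a n ∣ a (n + 1)

/-- The ratio `q n = a n / a (n-1)` as a real number. -/
noncomputable def qr (a : ℕ → ℕ) (n : ℕ) : ℝ := (a n : ℝ) / (a (n - 1) : ℝ)

/-- `(c n)` is a canonical representation sequence w.r.t. `(a n)`:
`0 ≤ c n < q n` and `c n < q n - 1` for infinitely many `n`. -/
def IsCanonicalRep (a : ℕ → ℕ) (c : ℕ → ℕ) : Prop :=
  c 0 = 0 ∧ (∀ n, 1 ≤ n → c n < a n / a (n - 1)) ∧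
    (∀ N, ∃ n, N ≤ n ∧ 1 ≤ n ∧ c n + 1 < a n / a (n - 1))

/-- Support of (the canonical representation of) `x`. -/
def suppRep (c : ℕ → ℕ) : Set ℕ := {n | 1 ≤ n ∧ c n ≠ 0}

/-- `supp_q(x) = {n : c n = q n - 1}`. -/
def suppqRep (a c : ℕ → ℕ) : Set ℕ := {n | 1 ≤ n ∧ c n + 1 = a n / a (n - 1)}

/-- A set `S ⊆ ℕ` is `q`-bounded if `(q n)` is bounded on `S`. -/
def QBounded (a : ℕ → ℕ) (S : Set ℕ) : Prop := ∃ M, ∀ n ∈ S, a n / a (n - 1) ≤ M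

/-- A set `S ⊆ ℕ` is `q`-divergent if `q n → ∞` along `n ∈ S`. -/
def QDivergent (a : ℕ → ℕ) (S : Set ℕ) : Prop :=
  Filter.Tendsto (fun n => a n / a (n - 1)) (Filter.atTop ⊓ Filter.principal S) Filter.atTop

/-- Statistical convergence in a topological space, via neighborhoods. -/
def StatNhdTendsto {α : Type*} [TopologicalSpace α] (y : ℕ → α) (ℓ : α) : Prop :=
  ∀ U ∈ nhds ℓ, HasDensity {n | y n ∉ U} 0

/-!
Write `T m = a m * ∑_{i > m} c i / a i` (`scaledTail a c m`). The digits of `a m * x` up to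
position `m` contribute an integer, so `T m` is the fractional part of `a m * x`, and the digit
bound `c i / a i ≤ 1 / a (i - 1) - 1 / a i` telescopes to `0 ≤ T m < 1`. A nonzero digit
`c (m + 1)` forces `T m ≥ 1 / q (m + 1)`, and a digit `c (m + 1) < q (m + 1) - 1` forces
`T m ≤ 1 - 1 / q (m + 1)`. On a `q`-bounded set both bounds are uniform, so once
`‖a m • x‖ = min (T m) (1 - T m)` is small, every `m + 1 ∈ B ∩ supp(x)` has the maximal digit and
`T m` is close to `1`.
-/
section Density

lemma hasDensity_zero_of_subset {A C : Set ℕ} (h : A ⊆ C) (hC : HasDensity C 0) :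
    HasDensity A 0 := by
  refine tendsto_of_tendsto_of_tendsto_of_le_of_le tendsto_const_nhds hC
    (fun n => by positivity) (fun n => ?_)
  gcongr
  exact Nat.card_mono ((finite_Iio n).inter_of_right C) (inter_subset_inter_left _ h)

lemma HasDensity.zero_union {A C : Set ℕ} (hA : HasDensity A 0) (hC : HasDensity C 0) :
    HasDensity (A ∪ C) 0 := by
  have hsum := hA.add hC
  rw [add_zero] at hsum
  refine tendsto_of_tendsto_of_tendsto_of_le_of_le tendsto_const_nhds hsum
    (fun n => by positivity) (fun n => ?_)
  rw [← add_div, union_inter_distrib_right]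
  gcongr
  simp only [Nat.card_coe_set_eq]
  exact_mod_cast ncard_union_le _ _

lemma hasDensity_zero_of_finite {A : Set ℕ} (hA : A.Finite) : HasDensity A 0 := by
  refine tendsto_of_tendsto_of_tendsto_of_le_of_le tendsto_const_nhds
    (tendsto_const_div_atTop_nhds_zero_nat (A.ncard : ℝ)) (fun n => by positivity)
    (fun n => ?_)
  gcongr
  rw [Nat.card_coe_set_eq]
  exact_mod_cast ncard_le_ncard inter_subset_left hA

lemma HasDensity.zero_of_eventually_mem {A C : Set ℕ} (hC : HasDensity C 0)
    (h : ∀ᶠ n in atTop, n ∈ A → n ∈ C) : HasDensity A 0 := by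
  obtain ⟨N, hN⟩ := eventually_atTop.1 h
  refine hasDensity_zero_of_subset (C := C ∪ Iio N) (fun n hn => ?_)
    (hC.zero_union (hasDensity_zero_of_finite (finite_Iio N)))
  by_cases hnN : n < N
  · exact Or.inr hnN
  · exact Or.inl (hN n (not_lt.1 hnN) hn)

end Density

variable {a c : ℕ → ℕ}

namespace IsArithmeticSeq

lemma pos (ha : IsArithmeticSeq a) (n : ℕ) : 0 < a n := by
  have := ha.2.1.monotone n.zero_le
  rw [ha.1] at this
  omega

lemma dvd_of_le (ha : IsArithmeticSeq a) {i j : ℕ} (h : i ≤ j) : a i ∣ a j :=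
  Nat.rel_of_forall_rel_succ_of_le (· ∣ ·) ha.2.2 h

lemma div_add_mul_one_div_le (ha : IsArithmeticSeq a) {d k m : ℕ}
    (h : d + k ≤ a (m + 1) / a m) : (d : ℝ) / a (m + 1) + k * (1 / a (m + 1)) ≤ 1 / a m := by
  have hnat : (d + k) * a m ≤ a (m + 1) := (Nat.le_div_iff_mul_le (ha.pos m)).1 h
  have hm : (0 : ℝ) < a m := by exact_mod_cast ha.pos m
  have hm1 : (0 : ℝ) < a (m + 1) := by exact_mod_cast ha.pos (m + 1)
  have hreal : ((d : ℝ) + k) * a m ≤ a (m + 1) := by exact_mod_cast hnat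
  rw [mul_one_div, ← add_div, div_le_div_iff₀ hm1 hm]
  linarith

end IsArithmeticSeq

noncomputable def tailSum (a c : ℕ → ℕ) (m : ℕ) : ℝ :=
  ∑' i, (c (i + (m + 1)) : ℝ) / a (i + (m + 1))

noncomputable def scaledTail (a c : ℕ → ℕ) (m : ℕ) : ℝ := a m * tailSum a c m

namespace IsCanonicalRep

lemma digit_lt (hc : IsCanonicalRep a c) (m : ℕ) : c (m + 1) < a (m + 1) / a m :=
  hc.2.1 (m + 1) m.succ_pos

lemma sum_range_add_inv_le (ha : IsArithmeticSeq a) (hc : IsCanonicalRep a c) (m k : ℕ) :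
    ∑ i ∈ Finset.range k, (c (i + (m + 1)) : ℝ) / a (i + (m + 1)) + 1 / a (k + m) ≤ 1 / a m := by
  induction k with
  | zero => simp
  | succ k ih =>
    have hdigit := ha.div_add_mul_one_div_le (k := 1) (hc.digit_lt (k + m))
    push_cast at hdigit
    rw [Finset.sum_range_succ, show k + 1 + m = k + m + 1 by omega, ← add_assoc]
    linarith

lemma summable (ha : IsArithmeticSeq a) (hc : IsCanonicalRep a c) :
    Summable (fun i => (c i : ℝ) / a i) := by
  refine (summable_nat_add_iff 1).1 (summable_of_sum_range_le (c := 1 / a 0)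
    (fun i => by positivity) (fun k => ?_))
  have h := hc.sum_range_add_inv_le ha 0 k
  have : (0 : ℝ) ≤ 1 / a (k + 0) := by positivity
  linarith

lemma summable_tail (ha : IsArithmeticSeq a) (hc : IsCanonicalRep a c) (m : ℕ) :
    Summable (fun i => (c (i + (m + 1)) : ℝ) / a (i + (m + 1))) :=
  (summable_nat_add_iff (m + 1)).2 (hc.summable ha)

lemma tailSum_nonneg (m : ℕ) : 0 ≤ tailSum a c m :=
  tsum_nonneg fun _ => by positivity

lemma tailSum_eq (ha : IsArithmeticSeq a) (hc : IsCanonicalRep a c) (m : ℕ) :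
    tailSum a c m = c (m + 1) / a (m + 1) + tailSum a c (m + 1) := by
  rw [tailSum, (hc.summable_tail ha m).tsum_eq_zero_add, tailSum]
  simp only [zero_add, add_assoc, add_comm 1 (m + 1)]

lemma tailSum_le (ha : IsArithmeticSeq a) (hc : IsCanonicalRep a c) (m : ℕ) :
    tailSum a c m ≤ 1 / a m :=
  le_of_tendsto' (hc.summable_tail ha m).hasSum.tendsto_sum_nat fun k => by
    have : (0 : ℝ) ≤ 1 / a (k + m) := by positivity
    linarith [hc.sum_range_add_inv_le ha m k]

/-- The gap `1 / a m - tailSum a c m` shrinks with `m`, strictly at every non-maximal digit, of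
which there are infinitely many. -/
lemma tailSum_lt (ha : IsArithmeticSeq a) (hc : IsCanonicalRep a c) (m : ℕ) :
    tailSum a c m < 1 / a m := by
  set gap : ℕ → ℝ := fun j => 1 / a j - tailSum a c j
  have hstep : ∀ j, 1 / a j - 1 / a (j + 1) - c (j + 1) / a (j + 1) + gap (j + 1) = gap j :=
    fun j => by simp only [gap, hc.tailSum_eq ha j]; ring
  have hanti : Antitone gap := antitone_nat_of_succ_le fun j => by
    have := ha.div_add_mul_one_div_le (k := 1) (hc.digit_lt j)
    push_cast at this
    linarith [hstep j]
  obtain ⟨p, hmp, hp1, hp⟩ := hc.2.2 (m + 1)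
  obtain ⟨j, rfl⟩ : ∃ j, p = j + 1 := ⟨p - 1, by omega⟩
  have hdigit := ha.div_add_mul_one_div_le (k := 2) (Nat.succ_le_of_lt hp)
  have hgap : 0 ≤ gap (j + 1) := sub_nonneg.2 (hc.tailSum_le ha (j + 1))
  have hpos : (0 : ℝ) < 1 / a (j + 1) := by have := ha.pos (j + 1); positivity
  have : 0 < gap j := by push_cast at hdigit; linarith [hstep j]
  linarith [hanti (show m ≤ j by omega)]

lemma scaledTail_nonneg (m : ℕ) : 0 ≤ scaledTail a c m :=
  mul_nonneg (Nat.cast_nonneg _) (tailSum_nonneg m)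

lemma scaledTail_lt_one (ha : IsArithmeticSeq a) (hc : IsCanonicalRep a c) (m : ℕ) :
    scaledTail a c m < 1 := by
  have hm : (0 : ℝ) < a m := by exact_mod_cast ha.pos m
  calc scaledTail a c m < a m * (1 / a m) := mul_lt_mul_of_pos_left (hc.tailSum_lt ha m) hm
    _ = 1 := by field_simp

lemma div_le_scaledTail (ha : IsArithmeticSeq a) (hc : IsCanonicalRep a c) {m : ℕ}
    (hm : c (m + 1) ≠ 0) : (a m : ℝ) / a (m + 1) ≤ scaledTail a c m := by
  have hdigit : (1 : ℝ) ≤ c (m + 1) := by exact_mod_cast Nat.one_le_iff_ne_zero.2 hm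
  have : (1 : ℝ) / a (m + 1) ≤ tailSum a c m := by
    rw [hc.tailSum_eq ha]
    have : (1 : ℝ) / a (m + 1) ≤ c (m + 1) / a (m + 1) := by gcongr
    linarith [tailSum_nonneg (a := a) (c := c) (m + 1)]
  calc (a m : ℝ) / a (m + 1) = a m * (1 / a (m + 1)) := by ring
    _ ≤ scaledTail a c m := mul_le_mul_of_nonneg_left this (Nat.cast_nonneg _)

lemma scaledTail_le_one_sub_div (ha : IsArithmeticSeq a) (hc : IsCanonicalRep a c) {m : ℕ}
    (hm : c (m + 1) + 1 ≠ a (m + 1) / a m) : scaledTail a c m ≤ 1 - a m / a (m + 1) := by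
  have hdigit := ha.div_add_mul_one_div_le (k := 2)
    (show c (m + 1) + 2 ≤ a (m + 1) / a m by have := hc.digit_lt m; omega)
  have hm0 : (0 : ℝ) < a m := by exact_mod_cast ha.pos m
  have : tailSum a c m ≤ 1 / a m - 1 / a (m + 1) := by
    rw [hc.tailSum_eq ha]
    push_cast at hdigit
    linarith [hc.tailSum_le ha (m + 1)]
  calc scaledTail a c m ≤ a m * (1 / a m - 1 / a (m + 1)) :=
        mul_le_mul_of_nonneg_left this hm0.le
    _ = 1 - a m / a (m + 1) := by field_simp

lemma exists_natCast_add_scaledTail (ha : IsArithmeticSeq a) (hc : IsCanonicalRep a c) (m : ℕ) :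
    ∃ N : ℕ, (a m : ℝ) * ∑' i, (c i : ℝ) / a i = N + scaledTail a c m := by
  refine ⟨∑ i ∈ Finset.range (m + 1), c i * (a m / a i), ?_⟩
  rw [← (hc.summable ha).sum_add_tsum_nat_add (m + 1), mul_add, Finset.mul_sum, Nat.cast_sum,
    scaledTail, tailSum]
  congr 1
  refine Finset.sum_congr rfl fun i hi => ?_
  have hdvd := ha.dvd_of_le (Nat.lt_succ_iff.1 (Finset.mem_range.1 hi))
  have hi0 : (a i : ℝ) ≠ 0 := by exact_mod_cast (ha.pos i).ne'
  rw [Nat.cast_mul, Nat.cast_div hdvd hi0]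
  ring

lemma fract_mul_tsum (ha : IsArithmeticSeq a) (hc : IsCanonicalRep a c) (m : ℕ) :
    Int.fract ((a m : ℝ) * ∑' i, (c i : ℝ) / a i) = scaledTail a c m := by
  obtain ⟨N, hN⟩ := hc.exists_natCast_add_scaledTail ha m
  rw [hN, Int.fract_natCast_add,
    Int.fract_eq_self.2 ⟨scaledTail_nonneg m, hc.scaledTail_lt_one ha m⟩]

lemma norm_nsmul_coe_tsum (ha : IsArithmeticSeq a) (hc : IsCanonicalRep a c) (m : ℕ) :
    ‖a m • ((∑' i, (c i : ℝ) / a i : ℝ) : AddCircle (1 : ℝ))‖ =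
      min (scaledTail a c m) (1 - scaledTail a c m) := by
  rw [← AddCircle.coe_nsmul, nsmul_eq_mul, UnitAddCircle.norm_eq, abs_sub_round_eq_min,
    hc.fract_mul_tsum ha]

end IsCanonicalRep

lemma QBounded.exists_pos_le_div (ha : IsArithmeticSeq a) {B : Set ℕ} (hB : QBounded a B) :
    ∃ r > (0 : ℝ), ∀ m, m + 1 ∈ B → r ≤ (a m : ℝ) / a (m + 1) := by
  obtain ⟨M, hM⟩ := hB
  refine ⟨1 / (M + 1), by positivity, fun m hm => ?_⟩
  have hm0 : (0 : ℝ) < a m := by exact_mod_cast ha.pos m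
  have hm1 : (0 : ℝ) < a (m + 1) := by exact_mod_cast ha.pos (m + 1)
  have hnat : a (m + 1) ≤ (M + 1) * a m :=
    ((Nat.div_lt_iff_lt_mul (ha.pos m)).1 (Nat.lt_succ_of_le (hM (m + 1) hm))).le
  have hreal : (a (m + 1) : ℝ) ≤ (M + 1) * a m := by exact_mod_cast hnat
  rw [div_le_div_iff₀ (by positivity) hm1]
  linarith

lemma IsCanonicalRep.mem_suppqRep_and_fract_eq_of_norm_lt (ha : IsArithmeticSeq a)
    (hc : IsCanonicalRep a c) {m : ℕ} {r : ℝ} (hr : r ≤ (a m : ℝ) / a (m + 1))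
    (hm : c (m + 1) ≠ 0)
    (hnorm : ‖a m • ((∑' i, (c i : ℝ) / a i : ℝ) : AddCircle (1 : ℝ))‖ < r) :
    m + 1 ∈ suppqRep a c ∧ Int.fract ((a m : ℝ) * ∑' i, (c i : ℝ) / a i) =
      1 - ‖a m • ((∑' i, (c i : ℝ) / a i : ℝ) : AddCircle (1 : ℝ))‖ := by
  rw [hc.norm_nsmul_coe_tsum ha, hc.fract_mul_tsum ha] at *
  have hlow := hr.trans (hc.div_le_scaledTail ha hm)
  have hnear : 1 - scaledTail a c m < r := by
    rcases min_lt_iff.1 hnorm with h | h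
    · linarith
    · exact h
  refine ⟨⟨m.succ_pos, ?_⟩, by rw [min_eq_right (by linarith)]; ring⟩
  by_contra hne
  linarith [hc.scaledTail_le_one_sub_div ha hne]

theorem lemma_nec_i_general (a c : ℕ → ℕ) (ha : IsArithmeticSeq a) (hc : IsCanonicalRep a c)
    (x : AddCircle (1 : ℝ))
    (hx : x = ((∑' n, (c n : ℝ) / (a n : ℝ) : ℝ) : AddCircle (1 : ℝ)))
    (B : Set ℕ)
    (hlim : Filter.Tendsto (fun n => a (n - 1) • x)
      (Filter.atTop ⊓ Filter.principal B) (nhds 0))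
    (hqb : QBounded a B) (hd : HasDensity (B \ suppRep c) 0) :
    HasDensity (B \ suppqRep a c) 0 ∧
      ∃ B' ⊆ B, HasDensity (B \ B') 0 ∧
        Filter.Tendsto
          (fun n => Int.fract ((a (n - 1) : ℝ) * ∑' i, (c i : ℝ) / (a i : ℝ)))
          (Filter.atTop ⊓ Filter.principal B') (nhds 1) := by
  subst hx
  obtain ⟨r, hr0, hr⟩ := hqb.exists_pos_le_div ha
  have hnorm := tendsto_zero_iff_norm_tendsto_zero.1 hlim
  have hsmall : ∀ᶠ n in atTop ⊓ 𝓟 B, n ∈ suppRep c → n ∈ suppqRep a c ∧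
      Int.fract ((a (n - 1) : ℝ) * ∑' i, (c i : ℝ) / a i) =
        1 - ‖a (n - 1) • ((∑' i, (c i : ℝ) / a i : ℝ) : AddCircle (1 : ℝ))‖ := by
    filter_upwards [hnorm.eventually (gt_mem_nhds hr0), mem_inf_of_right (mem_principal_self B)] with
      n hn hnB hsupp
    obtain ⟨m, rfl⟩ := Nat.exists_eq_add_of_le' hsupp.1
    exact hc.mem_suppqRep_and_fract_eq_of_norm_lt ha (hr m hnB) hsupp.2 hn
  constructor
  · exact hd.zero_of_eventually_mem ((eventually_inf_principal.1 hsmall).mono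
      fun n h hn => ⟨hn.1, fun hs => hn.2 (h hn.1 hs).1⟩)
  refine ⟨B ∩ suppRep c, inter_subset_left, by rwa [sdiff_self_inter], ?_⟩
  have hB' : atTop ⊓ 𝓟 (B ∩ suppRep c) ≤ atTop ⊓ 𝓟 B :=
    inf_le_inf_left _ (principal_mono.2 inter_subset_left)
  have hfract := ((hsmall.filter_mono hB').and (mem_inf_of_right (mem_principal_self _))).mono
    fun n h => (h.1 h.2.2).2.symm
  simpa using (tendsto_const_nhds.sub (hnorm.mono_left hB')).congr' hfract

/-- Lemma 1.8 (i): if `B` has positive upper density, `a_{n-1} x → 0` along `B`,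
`B` is `q`-bounded and `B ⊆^d supp(x)`, then `B ⊆^d supp_q(x)` and the
fractional parts `{a_{n-1} x}` converge to `1` in `ℝ` along some `B' ⊆ B`
with `d(B \ B') = 0`. -/
theorem lemma_nec_i (a c : ℕ → ℕ) (ha : IsArithmeticSeq a) (hc : IsCanonicalRep a c)
    (x : AddCircle (1 : ℝ))
    (hx : x = ((∑' n, (c n : ℝ) / (a n : ℝ) : ℝ) : AddCircle (1 : ℝ)))
    (B : Set ℕ) (hB : 0 < upperDensity B)
    (hlim : Filter.Tendsto (fun n => a (n - 1) • x)
      (Filter.atTop ⊓ Filter.principal B) (nhds 0))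
    (hqb : QBounded a B) (hd : HasDensity (B \ suppRep c) 0) :
    HasDensity (B \ suppqRep a c) 0 ∧
      ∃ B' ⊆ B, HasDensity (B \ B') 0 ∧
        Filter.Tendsto
          (fun n => Int.fract ((a (n - 1) : ℝ) * ∑' i, (c i : ℝ) / (a i : ℝ)))
          (Filter.atTop ⊓ Filter.principal B') (nhds 1) :=
  lemma_nec_i_general a c ha hc x hx B hlim hqb hd
end

section
/- Let (a_n) be an arithmetic sequence with ratios q_n = a_n/a_{n-1}, and let A ⊆ ℕ have positive upper natural density with (q_n)_{n∈A} unbounded. If there is no q-bounded subset A' ⊆ A with positive upper density, then there exists B ⊆ A with d(A \ B) = 0 such that lim_{n ∈ B} q_n = ∞. -/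
/-!
Every level set `Sₖ = {n ∈ A | qₙ ≤ k}` is `q`-bounded, hence of density zero. Since the `Sₖ`
increase with `k`, a diagonal argument glues them into one set `T` of density zero that
contains each `Sₖ` from some point `Mₖ` on: take `T = ⋃ₖ Sₖ ∩ [Mₖ, Mₖ₊₁)`, with `Mₖ` so large
that `Sₖ` has relative density below `1/(k+1)` on every initial segment longer than `Mₖ`.
Then `B = A \ T` works: beyond `Mₖ`, no element of `B` has `qₙ ≤ k`.
-/

open Filter Topology Set

lemma card_inter_Iio_le (S : Set ℕ) (n : ℕ) : Nat.card ↥(S ∩ Iio n) ≤ n := by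
  simpa using Nat.card_mono (finite_Iio n) (inter_subset_right (s := S))

lemma card_inter_Iio_div_nonneg (S : Set ℕ) (n : ℕ) :
    0 ≤ (Nat.card ↥(S ∩ Iio n) : ℝ) / n := by
  positivity

lemma card_inter_Iio_div_le_one (S : Set ℕ) (n : ℕ) :
    (Nat.card ↥(S ∩ Iio n) : ℝ) / n ≤ 1 :=
  div_le_one_of_le₀ (by exact_mod_cast card_inter_Iio_le S n) (Nat.cast_nonneg n)

lemma card_inter_Iio_div_mono {S T : Set ℕ} (h : S ⊆ T) (n : ℕ) :
    (Nat.card ↥(S ∩ Iio n) : ℝ) / n ≤ (Nat.card ↥(T ∩ Iio n) : ℝ) / n := by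
  gcongr
  exact Nat.card_mono ((finite_Iio n).inter_of_right T) (inter_subset_inter_left _ h)

lemma hasDensity_zero_iff {S : Set ℕ} :
    HasDensity S 0 ↔ ∀ ε > 0, ∀ᶠ n in atTop, (Nat.card ↥(S ∩ Iio n) : ℝ) / n < ε := by
  refine ⟨fun h ε hε => h.eventually (gt_mem_nhds hε), fun h => tendsto_order.2
    ⟨fun b hb => Eventually.of_forall fun n => hb.trans_le (card_inter_Iio_div_nonneg S n), h⟩⟩

lemma hasDensity_zero_of_upperDensity_nonpos {S : Set ℕ} (h : upperDensity S ≤ 0) :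
    HasDensity S 0 :=
  hasDensity_zero_iff.2 fun _ hε => eventually_lt_of_limsup_lt (h.trans_lt hε)
    (isBoundedUnder_of ⟨1, card_inter_Iio_div_le_one S⟩)

lemma HasDensity.mono_zero {S T : Set ℕ} (hT : HasDensity T 0) (h : S ⊆ T) :
    HasDensity S 0 :=
  squeeze_zero (card_inter_Iio_div_nonneg S) (card_inter_Iio_div_mono h) hT

lemma StrictMono.exists_le_lt_succ {M : ℕ → ℕ} (hM : StrictMono M) {k n : ℕ} (hn : M k ≤ n) :
    ∃ j, k ≤ j ∧ M j ≤ n ∧ n < M (j + 1) := by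
  have hkn : k ≤ n := hM.le_apply.trans hn
  refine ⟨Nat.findGreatest (fun j => M j ≤ n) n, Nat.le_findGreatest hkn hn,
    Nat.findGreatest_spec (P := fun j => M j ≤ n) hkn hn, ?_⟩
  by_contra! h
  exact Nat.findGreatest_is_greatest (Nat.lt_succ_self _) (hM.le_apply.trans h) h

/-- The density-zero sets form a P-ideal. -/
lemma exists_hasDensity_zero_eventually_mem {S : ℕ → Set ℕ} (hmono : Monotone S)
    (hS : ∀ k, HasDensity (S k) 0) :
    ∃ T, HasDensity T 0 ∧ ∀ k, ∀ᶠ n in atTop, n ∈ S k → n ∈ T := by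
  have hsmall : ∀ k, ∃ N, ∀ m ≥ N, ∀ n ≥ m,
      (Nat.card ↥(S k ∩ Iio n) : ℝ) / n < 1 / (k + 1) := fun k => by
    obtain ⟨N, hN⟩ := eventually_atTop.1 (hasDensity_zero_iff.1 (hS k) _ Nat.one_div_pos_of_nat)
    exact ⟨N, fun m hm n hn => hN n (hm.trans hn)⟩
  obtain ⟨M, hM, hMsmall⟩ := extraction_forall_of_eventually' hsmall
  set T := ⋃ k, S k ∩ Ico (M k) (M (k + 1))
  have hblock : ∀ j n, M j ≤ n → n < M (j + 1) → T ∩ Iio n ⊆ S j := by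
    rintro j n - hnj m ⟨hm, hmn⟩
    obtain ⟨i, hmi, him, -⟩ := mem_iUnion.1 hm
    have hij : i < j + 1 := hM.lt_iff_lt.1 (him.trans_lt ((mem_Iio.1 hmn).trans hnj))
    exact hmono (Nat.le_of_lt_succ hij) hmi
  refine ⟨T, hasDensity_zero_iff.2 fun ε hε => ?_, fun k => ?_⟩
  · obtain ⟨k, hk⟩ := exists_nat_one_div_lt hε
    filter_upwards [eventually_ge_atTop (M k)] with n hn
    obtain ⟨j, hkj, hjn, hnj⟩ := hM.exists_le_lt_succ hn
    calc (Nat.card ↥(T ∩ Iio n) : ℝ) / n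
        ≤ (Nat.card ↥(S j ∩ Iio n) : ℝ) / n := by
          simpa only [inter_eq_left.2 inter_subset_right, inter_assoc] using
            card_inter_Iio_div_mono (hblock j n hjn hnj) n
      _ < 1 / (j + 1) := hMsmall j n hjn
      _ ≤ 1 / (k + 1) := by gcongr
      _ < ε := hk
  · filter_upwards [eventually_ge_atTop (M k)] with n hn hnS
    obtain ⟨j, hkj, hjn, hnj⟩ := hM.exists_le_lt_succ hn
    exact mem_iUnion.2 ⟨j, hmono hkj hnS, hjn, hnj⟩

theorem lemma_suf2_general (a : ℕ → ℕ) (A : Set ℕ)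
    (hno : ¬ ∃ A' ⊆ A, 0 < upperDensity A' ∧ QBounded a A') :
    ∃ B ⊆ A, HasDensity (A \ B) 0 ∧ QDivergent a B := by
  set S : ℕ → Set ℕ := fun k => {n | n ∈ A ∧ a n / a (n - 1) ≤ k}
  have hS : ∀ k, HasDensity (S k) 0 := fun k =>
    hasDensity_zero_of_upperDensity_nonpos <| not_lt.1 fun hpos =>
      hno ⟨S k, fun n hn => hn.1, hpos, k, fun n hn => hn.2⟩
  have hmono : Monotone S := fun k l hkl n hn => ⟨hn.1, hn.2.trans hkl⟩
  obtain ⟨T, hT, hST⟩ := exists_hasDensity_zero_eventually_mem hmono hS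
  refine ⟨A \ T, sdiff_subset, hT.mono_zero fun n hn => by_contra fun hnT => hn.2 ⟨hn.1, hnT⟩, ?_⟩
  rw [QDivergent, tendsto_atTop]
  intro k
  rw [eventually_inf_principal]
  filter_upwards [hST k] with n hn hnB
  by_contra! hlt
  exact hnB.2 (hn ⟨hnB.1, hlt.le⟩)

/-- Lemma 1.9: if `A` has positive upper density, is not `q`-bounded, and has no
`q`-bounded subset of positive upper density, then there is a `q`-divergent
`B ⊆ A` with `d(A \ B) = 0`. -/
theorem lemma_suf2 (a : ℕ → ℕ) (ha : IsArithmeticSeq a)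
    (A : Set ℕ) (hA : 0 < upperDensity A) (hub : ¬ QBounded a A)
    (hno : ¬ ∃ A' ⊆ A, 0 < upperDensity A' ∧ QBounded a A') :
    ∃ B ⊆ A, HasDensity (A \ B) 0 ∧ QDivergent a B :=
  lemma_suf2_general a A hno
end

section
/- Let (q_n) be a sequence of natural numbers and for each i let A_i = {n : q_n = i}. Then (q_n) has the d-splitting property if and only if there does not exist an infinite increasing sequence of indices (n_k) such that the upper natural density of A_{n_k} is positive for all k. -/
open Filter Topology Set

/-- The `d`-splitting property of a sequence `(q n)` of naturals. -/
def HasDSplitting (q : ℕ → ℕ) : Prop :=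
  ∃ B D : Set ℕ, B ∪ D = Set.univ ∧ Disjoint B D ∧
    (B = ∅ ∨ 0 < upperDensity B) ∧ (D = ∅ ∨ 0 < upperDensity D) ∧
    (0 < upperDensity B →
      ∃ B' : Set ℕ, HasDensity (symmDiff B B') 0 ∧ ∃ M, ∀ n ∈ B', q n ≤ M) ∧
    (0 < upperDensity D →
      ∃ D' : Set ℕ, HasDensity (symmDiff D D') 0 ∧
        Filter.Tendsto q (Filter.atTop ⊓ Filter.principal D') Filter.atTop)

/-- The splitting property of a sequence `(q n)` of naturals. -/
def HasSplitting (q : ℕ → ℕ) : Prop :=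
  ∃ B I : Set ℕ, B ∪ I = Set.univ ∧ Disjoint B I ∧
    (B = ∅ ∨ B.Infinite) ∧ (I = ∅ ∨ I.Infinite) ∧
    (B.Infinite → ∃ M, ∀ n ∈ B, q n ≤ M) ∧
    (I.Infinite → Filter.Tendsto q (Filter.atTop ⊓ Filter.principal I) Filter.atTop)

/-!
Both conditions say that all but finitely many fibres `{n | q n = i}` have density zero.
A fibre meets the bounded part of a `d`-splitting in a null set once `i` exceeds the bound, and
meets the divergent part in a null set for every `i`, because `q` tends to infinity along a set
differing from it by a null set. Conversely, put `n` into the bounded part when the fibre of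
`q n` is not null (finitely many values) and into the divergent part `D` otherwise. Then the
sets `{n ∈ D | q n ≤ m}` are null and increasing; choosing for each `m` a threshold beyond which
its partial densities are below `1 / (m + 1)` yields a single null set `U` containing each of
them up to a finite set, and `q` tends to infinity along `D \ U`.
-/

lemma frequently_atTop_iff_exists_strictMono {p : ℕ → Prop} :
    (∃ᶠ n in atTop, p n) ↔ ∃ φ : ℕ → ℕ, StrictMono φ ∧ ∀ k, p (φ k) :=
  ⟨extraction_of_frequently_atTop,
    fun ⟨_, hφ, hp⟩ => hφ.tendsto_atTop.frequently (Frequently.of_forall hp)⟩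

noncomputable def partialDensity (A : Set ℕ) (n : ℕ) : ℝ :=
  (Nat.card ↥(A ∩ Iio n) : ℝ) / n

section partialDensity

variable {A B : Set ℕ} {n : ℕ}

lemma partialDensity_nonneg (A : Set ℕ) (n : ℕ) : 0 ≤ partialDensity A n := by
  unfold partialDensity; positivity

lemma partialDensity_le_of_inter_subset (h : A ∩ Iio n ⊆ B ∩ Iio n) :
    partialDensity A n ≤ partialDensity B n := by
  unfold partialDensity
  gcongr
  simp only [Nat.card_coe_set_eq]
  exact ncard_le_ncard h ((finite_Iio n).subset inter_subset_right)

lemma partialDensity_mono (h : A ⊆ B) (n : ℕ) : partialDensity A n ≤ partialDensity B n :=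
  partialDensity_le_of_inter_subset (inter_subset_inter_left _ h)

lemma partialDensity_le_one (A : Set ℕ) (n : ℕ) : partialDensity A n ≤ 1 := by
  rcases n.eq_zero_or_pos with rfl | hn
  · simp [partialDensity]
  rw [partialDensity, div_le_one (by positivity), Nat.card_coe_set_eq]
  exact_mod_cast (ncard_le_ncard inter_subset_right (finite_Iio n)).trans_eq (ncard_Iio_nat n)

lemma partialDensity_univ (hn : 0 < n) : partialDensity univ n = 1 := by
  rw [partialDensity, univ_inter, Nat.card_coe_set_eq, ncard_Iio_nat, div_self (by positivity)]

lemma partialDensity_union_le (A B : Set ℕ) (n : ℕ) :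
    partialDensity (A ∪ B) n ≤ partialDensity A n + partialDensity B n := by
  unfold partialDensity
  rw [← add_div]
  gcongr
  simp only [Nat.card_coe_set_eq, union_inter_distrib_right]
  exact_mod_cast ncard_union_le _ _

lemma partialDensity_le_ncard_div (A : Set ℕ) (n : ℕ) (hA : A.Finite) :
    partialDensity A n ≤ A.ncard / n := by
  unfold partialDensity
  gcongr
  rw [Nat.card_coe_set_eq]
  exact ncard_le_ncard inter_subset_left hA

end partialDensity

section HasDensity

variable {A B : Set ℕ}

lemma HasDensity.zero_mono (hB : HasDensity B 0) (h : A ⊆ B) : HasDensity A 0 :=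
  squeeze_zero (partialDensity_nonneg A) (partialDensity_mono h) hB

lemma HasDensity.zero_union_s15 (hA : HasDensity A 0) (hB : HasDensity B 0) :
    HasDensity (A ∪ B) 0 :=
  squeeze_zero (partialDensity_nonneg _) (partialDensity_union_le A B)
    (add_zero (0 : ℝ) ▸ hA.add hB)

lemma Set.Finite.hasDensity_zero (hA : A.Finite) : HasDensity A 0 :=
  squeeze_zero (partialDensity_nonneg A) (partialDensity_le_ncard_div A · hA)
    (tendsto_const_div_atTop_nhds_zero_nat _)

lemma hasDensity_zero_biUnion {ι : Type*} (s : Finset ι) {E : ι → Set ℕ}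
    (h : ∀ i ∈ s, HasDensity (E i) 0) : HasDensity (⋃ i ∈ s, E i) 0 := by
  classical
  induction s using Finset.induction with
  | empty => simpa using finite_empty.hasDensity_zero
  | insert a s _ ih =>
    rw [Finset.set_biUnion_insert]
    exact (h a (s.mem_insert_self a)).zero_union_s15 (ih fun i hi => h i (Finset.mem_insert_of_mem hi))

lemma HasDensity.inter_zero_of_symmDiff {A' S : Set ℕ} (hAA' : HasDensity (symmDiff A A') 0)
    (hA' : HasDensity (A' ∩ S) 0) : HasDensity (A ∩ S) 0 := by
  refine (hAA'.zero_union_s15 hA').zero_mono fun n ⟨hnA, hnS⟩ => ?_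
  by_cases hnA' : n ∈ A'
  · exact Or.inr ⟨hnA', hnS⟩
  · exact Or.inl (Or.inl ⟨hnA, hnA'⟩)

end HasDensity

lemma upperDensity_mono {A B : Set ℕ} (h : A ⊆ B) : upperDensity A ≤ upperDensity B :=
  limsup_le_limsup (Eventually.of_forall (partialDensity_mono h))
    (isCoboundedUnder_le_of_le _ (partialDensity_nonneg A))
    (isBoundedUnder_of ⟨1, partialDensity_le_one B⟩)

lemma upperDensity_univ : upperDensity univ = 1 :=
  Tendsto.limsup_eq <| tendsto_const_nhds.congr' <|
    (eventually_gt_atTop 0).mono fun _ hn => (partialDensity_univ hn).symm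

lemma upperDensity_pos_iff {A : Set ℕ} : 0 < upperDensity A ↔ ¬HasDensity A 0 := by
  refine ⟨fun hpos h0 => hpos.ne' (Tendsto.limsup_eq h0), fun h0 => ?_⟩
  contrapose! h0
  have hbdd : IsBoundedUnder (· ≤ ·) atTop (partialDensity A) :=
    isBoundedUnder_of ⟨1, partialDensity_le_one A⟩
  have hnonneg : ∀ᶠ n in atTop, 0 ≤ partialDensity A n :=
    Eventually.of_forall (partialDensity_nonneg A)
  exact tendsto_of_le_liminf_of_limsup_le (le_liminf_of_le hbdd.isCoboundedUnder_ge hnonneg) h0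
    hbdd (isBoundedUnder_of ⟨0, partialDensity_nonneg A⟩)

lemma exists_hasDensity_zero_forall_diff_finite {E : ℕ → Set ℕ} (hE : Monotone E)
    (h : ∀ m, HasDensity (E m) 0) : ∃ U, HasDensity U 0 ∧ ∀ m, (E m \ U).Finite := by
  have hthreshold : ∀ m, ∃ N, m ≤ N ∧
      ∀ n ≥ N, partialDensity (E m) n < 1 / (m + 1) := by
    intro m
    have hpos : (0 : ℝ) < 1 / (m + 1) := by positivity
    obtain ⟨a, ha⟩ := eventually_atTop.1 ((h m).eventually_lt_const hpos)
    exact ⟨max a m, le_max_right a m, fun n hn => ha n (le_of_max_le_left hn)⟩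
  choose N hmN hN using hthreshold
  set U := ⋃ m, E m ∩ Ici (N m)
  -- `J n` is the last stage whose threshold has been passed by time `n`.
  set J : ℕ → ℕ := fun n => Nat.findGreatest (fun j => N j ≤ n) n
  have hUJ : ∀ n, U ∩ Iio n ⊆ E (J n) ∩ Iio n := by
    rintro n k ⟨hkU, hkn⟩
    obtain ⟨m, hkm, hNk⟩ := mem_iUnion.1 hkU
    have hNn : N m ≤ n := hNk.trans (le_of_lt hkn)
    exact ⟨hE (Nat.le_findGreatest ((hmN m).trans hNn) hNn) hkm, hkn⟩
  have hJ : Tendsto J atTop atTop := tendsto_atTop.2 fun m =>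
    (eventually_ge_atTop (N m)).mono fun n hn => Nat.le_findGreatest ((hmN m).trans hn) hn
  refine ⟨U, squeeze_zero' (Eventually.of_forall (partialDensity_nonneg U)) ?_
    (tendsto_one_div_add_atTop_nhds_zero_nat.comp hJ), fun m => ?_⟩
  · filter_upwards [eventually_ge_atTop (N 0)] with n hn
    have hNJ : N (J n) ≤ n := Nat.findGreatest_spec (P := fun j => N j ≤ n) (Nat.zero_le n) hn
    calc partialDensity U n ≤ partialDensity (E (J n)) n :=
          partialDensity_le_of_inter_subset (hUJ n)
      _ ≤ 1 / (J n + 1) := (hN _ n hNJ).le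
  · refine (finite_Iio (N m)).subset fun n ⟨hnE, hnU⟩ => ?_
    by_contra hNn
    exact hnU (mem_iUnion.2 ⟨m, hnE, mem_Ici.2 (not_lt.1 hNn)⟩)

lemma exists_tendsto_atTop_of_hasDensity_inter_fiber_zero {q : ℕ → ℕ} {D : Set ℕ}
    (h : ∀ i, HasDensity (D ∩ {n | q n = i}) 0) :
    ∃ D', HasDensity (symmDiff D D') 0 ∧ Tendsto q (atTop ⊓ 𝓟 D') atTop := by
  set E : ℕ → Set ℕ := fun m => D ∩ {n | q n ≤ m}
  have hE : Monotone E := fun a b hab n ⟨hnD, hn⟩ => ⟨hnD, hn.trans hab⟩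
  have hE0 : ∀ m, HasDensity (E m) 0 := fun m =>
    (hasDensity_zero_biUnion (Finset.range (m + 1)) fun i _ => h i).zero_mono
      fun n ⟨hnD, hn⟩ => mem_biUnion (Finset.mem_range.2 (Nat.lt_succ_of_le hn)) ⟨hnD, rfl⟩
  obtain ⟨U, hU, hEU⟩ := exists_hasDensity_zero_forall_diff_finite hE hE0
  refine ⟨D \ U, hU.zero_mono ?_, tendsto_atTop.2 fun b => ?_⟩
  · rw [symmDiff_of_ge sdiff_subset]
    exact fun n ⟨hnD, hn⟩ => by_contra fun hnU => hn ⟨hnD, hnU⟩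
  · rw [eventually_inf_principal]
    filter_upwards [Nat.cofinite_eq_atTop ▸ (hEU b).eventually_cofinite_notMem] with n hn hnD
    by_contra hqb
    exact hn ⟨⟨hnD.1, (not_le.1 hqb).le⟩, hnD.2⟩

lemma finite_inter_fiber_of_tendsto_atTop {q : ℕ → ℕ} {D : Set ℕ}
    (h : Tendsto q (atTop ⊓ 𝓟 D) atTop) (i : ℕ) : (D ∩ {n | q n = i}).Finite := by
  have hev := eventually_inf_principal.1 (h.eventually_gt_atTop i)
  rw [← Nat.cofinite_eq_atTop, eventually_cofinite] at hev
  exact hev.subset fun n ⟨hnD, hn⟩ hlt => (hlt hnD).ne' hn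

theorem HasDSplitting.eventually_hasDensity_fiber_zero {q : ℕ → ℕ} (h : HasDSplitting q) :
    ∀ᶠ i in atTop, HasDensity {n | q n = i} 0 := by
  obtain ⟨B, D, hBD, -, -, -, hB, hD⟩ := h
  have hBfiber : ∀ᶠ i in atTop, HasDensity (B ∩ {n | q n = i}) 0 := by
    by_cases hB0 : HasDensity B 0
    · exact Eventually.of_forall fun i => hB0.zero_mono inter_subset_left
    obtain ⟨B', hBB', M, hM⟩ := hB (upperDensity_pos_iff.2 hB0)
    filter_upwards [eventually_gt_atTop M] with i hi
    have hB'fiber : B' ∩ {n | q n = i} = ∅ :=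
      eq_empty_of_forall_notMem fun n hn => hi.not_ge (hn.2 ▸ hM n hn.1)
    exact hBB'.inter_zero_of_symmDiff (hB'fiber ▸ finite_empty.hasDensity_zero)
  have hDfiber : ∀ i, HasDensity (D ∩ {n | q n = i}) 0 := by
    by_cases hD0 : HasDensity D 0
    · exact fun i => hD0.zero_mono inter_subset_left
    obtain ⟨D', hDD', hD'⟩ := hD (upperDensity_pos_iff.2 hD0)
    exact fun i =>
      hDD'.inter_zero_of_symmDiff (finite_inter_fiber_of_tendsto_atTop hD' i).hasDensity_zero
  filter_upwards [hBfiber] with i hi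
  refine (hi.zero_union_s15 (hDfiber i)).zero_mono ?_
  rw [← union_inter_distrib_right, hBD, univ_inter]

theorem hasDSplitting_of_eventually_hasDensity_fiber_zero {q : ℕ → ℕ}
    (h : ∀ᶠ i in atTop, HasDensity {n | q n = i} 0) : HasDSplitting q := by
  set P := {i | ¬HasDensity {n | q n = i} 0}
  obtain ⟨M, hM⟩ := (eventually_cofinite.1 (Nat.cofinite_eq_atTop ▸ h) : P.Finite).bddAbove
  set B := {n | q n ∈ P}
  have hBbdd : ∀ n ∈ B, q n ≤ M := fun n hn => hM hn
  have hBpos : B = ∅ ∨ 0 < upperDensity B := by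
    refine B.eq_empty_or_nonempty.imp_right fun ⟨n, hn⟩ => ?_
    have hfiber : {m | q m = q n} ⊆ B := fun m (hm : q m = q n) => show q m ∈ P from hm ▸ hn
    exact (upperDensity_pos_iff.2 hn).trans_le (upperDensity_mono hfiber)
  have hBcfiber : ∀ i, HasDensity (Bᶜ ∩ {n | q n = i}) 0 := by
    intro i
    by_cases hi : i ∈ P
    · have hBcfiber_eq : Bᶜ ∩ {n | q n = i} = ∅ :=
        eq_empty_of_forall_notMem fun n hn => hn.1 (show q n ∈ P from hn.2.symm ▸ hi)
      exact hBcfiber_eq ▸ finite_empty.hasDensity_zero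
    · exact (not_not.1 hi).zero_mono inter_subset_right
  by_cases hBc0 : HasDensity Bᶜ 0
  · refine ⟨univ, ∅, union_empty _, disjoint_empty _, Or.inr (upperDensity_univ ▸ one_pos),
      Or.inl rfl, fun _ => ⟨B, ?_, M, hBbdd⟩, fun h0 => ?_⟩
    · rwa [← top_eq_univ, top_symmDiff]
    · exact absurd finite_empty.hasDensity_zero (upperDensity_pos_iff.1 h0)
  · refine ⟨B, Bᶜ, union_compl_self B, disjoint_compl_right, hBpos,
      Or.inr (upperDensity_pos_iff.2 hBc0), fun _ => ⟨B, ?_, M, hBbdd⟩,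
      fun _ => exists_tendsto_atTop_of_hasDensity_inter_fiber_zero hBcfiber⟩
    rw [symmDiff_self]
    exact finite_empty.hasDensity_zero

theorem hasDSplitting_iff_eventually_hasDensity_fiber_zero {q : ℕ → ℕ} :
    HasDSplitting q ↔ ∀ᶠ i in atTop, HasDensity {n | q n = i} 0 :=
  ⟨HasDSplitting.eventually_hasDensity_fiber_zero,
    hasDSplitting_of_eventually_hasDensity_fiber_zero⟩

/-- `(q n)` has the `d`-splitting property iff there is no infinite increasing
sequence of indices `(n_k)` with `upperDensity {n : q n = n_k} > 0` for all `k`. -/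
theorem hasDSplitting_iff_no_posDensity_fibers (q : ℕ → ℕ) :
    HasDSplitting q ↔
      ¬ ∃ f : ℕ → ℕ, StrictMono f ∧ ∀ k, 0 < upperDensity {n | q n = f k} := by
  simp_rw [hasDSplitting_iff_eventually_hasDensity_fiber_zero, upperDensity_pos_iff,
    ← frequently_atTop_iff_exists_strictMono (p := fun i => ¬HasDensity {n | q n = i} 0),
    not_frequently, not_not]
end
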